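/- Let V ⊆ H be a subspace of finite dimension r ≥ 1 and let α = (α_j)_{j∈ℕ} be the local coherence of V with respect to F. Then α is square-summable and Σ_{j∈ℕ} α_j² ≤ r². -/

import Mathlib

noncomputable section

/-- `H = ℓ²(ℕ; ℂ)`, the Hilbert space of square-summable complex sequences. -/
abbrev Hspace := lp (fun _ : ℕ => ℂ) 2

/-!
Fix an orthonormal basis `b₁, …, b_r` of `V`. For a unit vector `x ∈ V`, expanding `x` in this
basis and applying Cauchy–Schwarz gives `|(Fx)_j|² ≤ ∑ᵢ |(F bᵢ)_j|²`, hence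
`α_j² ≤ ∑ᵢ |(F bᵢ)_j|²`. Summing over `j`, each `F bᵢ` is a unit vector of `ℓ²`, so the right-hand
sides sum to `r ≤ r²`.
-/

open scoped InnerProductSpace

theorem OrthonormalBasis.norm_map_sq_le {ι 𝕜 E G : Type*} [Fintype ι] [RCLike 𝕜]
    [NormedAddCommGroup E] [InnerProductSpace 𝕜 E] [NormedAddCommGroup G] [NormedSpace 𝕜 G]
    (b : OrthonormalBasis ι 𝕜 E) (φ : E →ₗ[𝕜] G) (x : E) :
    ‖φ x‖ ^ 2 ≤ ‖x‖ ^ 2 * ∑ i, ‖φ (b i)‖ ^ 2 := by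
  have hφx : ‖φ x‖ ≤ ∑ i, ‖⟪b i, x⟫_𝕜‖ * ‖φ (b i)‖ := by
    conv_lhs => rw [← b.sum_repr' x]
    simp only [map_sum, map_smul]
    exact (norm_sum_le _ _).trans_eq (by simp only [norm_smul])
  calc ‖φ x‖ ^ 2 ≤ (∑ i, ‖⟪b i, x⟫_𝕜‖ * ‖φ (b i)‖) ^ 2 := by gcongr
    _ ≤ (∑ i, ‖⟪b i, x⟫_𝕜‖ ^ 2) * ∑ i, ‖φ (b i)‖ ^ 2 := Finset.sum_mul_sq_le_sq_mul_sq _ _ _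
    _ = ‖x‖ ^ 2 * ∑ i, ‖φ (b i)‖ ^ 2 := by rw [b.sum_sq_norm_inner_right]

theorem lp.hasSum_norm_sq {α : Type*} {E : α → Type*} [∀ i, NormedAddCommGroup (E i)]
    (f : lp E 2) : HasSum (fun i => ‖f i‖ ^ 2) (‖f‖ ^ 2) := by
  simpa only [ENNReal.toReal_ofNat, Real.rpow_ofNat] using lp.hasSum_norm (by norm_num) f

theorem lp.hasSum_sum_norm_sq {ι α : Type*} {E : α → Type*} [∀ i, NormedAddCommGroup (E i)]
    (s : Finset ι) (f : ι → lp E 2) :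
    HasSum (fun j => ∑ i ∈ s, ‖f i j‖ ^ 2) (∑ i ∈ s, ‖f i‖ ^ 2) :=
  hasSum_sum fun i _ => lp.hasSum_norm_sq (f i)

theorem IsLUB.sq_le {S : Set ℝ} {a c : ℝ} (hS : IsLUB S a) (h0 : ∀ t ∈ S, 0 ≤ t)
    (hc : ∀ t ∈ S, t ^ 2 ≤ c) : a ^ 2 ≤ c := by
  obtain ⟨t, ht⟩ := hS.nonempty
  have ha : 0 ≤ a := (h0 t ht).trans (hS.1 ht)
  have hc0 : 0 ≤ c := (sq_nonneg t).trans (hc t ht)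
  rw [← Real.le_sqrt ha hc0]
  exact hS.2 fun t ht => Real.le_sqrt_of_sq_le (hc t ht)

theorem local_coherence_sq_summable_general
    (F : Hspace ≃ₗᵢ[ℂ] Hspace) (V : Submodule ℂ Hspace)
    (r : ℕ) (hdim : Module.finrank ℂ V = r) [FiniteDimensional ℂ V]
    (α : ℕ → ℝ)
    (hα : ∀ j : ℕ, IsLUB {t : ℝ | ∃ x ∈ V, ‖x‖ = 1 ∧ t = ‖F x j‖} (α j)) :
    Summable (fun j => α j ^ 2) ∧ ∑' j : ℕ, α j ^ 2 ≤ (r : ℝ) ^ 2 := by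
  let b : OrthonormalBasis (Fin r) ℂ V := (stdOrthonormalBasis ℂ V).reindex (finCongr hdim)
  let y : Fin r → Hspace := fun i => F (b i)
  let φ : ℕ → V →ₗ[ℂ] ℂ := fun j =>
    lp.evalₗ (fun _ : ℕ => ℂ) 2 j ∘ₗ F.toLinearMap ∘ₗ V.subtype
  have hbound : ∀ j, α j ^ 2 ≤ ∑ i, ‖y i j‖ ^ 2 := by
    intro j
    refine (hα j).sq_le (by rintro _ ⟨x, -, -, rfl⟩; positivity) ?_
    rintro _ ⟨x, hxV, hx1, rfl⟩
    simpa [φ, y, hx1] using b.norm_map_sq_le (φ j) ⟨x, hxV⟩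
  have hsum : HasSum (fun j => ∑ i, ‖y i j‖ ^ 2) r := by
    simpa [y, Submodule.norm_coe, b.norm_eq_one] using lp.hasSum_sum_norm_sq Finset.univ y
  have hsummable : Summable (fun j => α j ^ 2) :=
    hsum.summable.of_nonneg_of_le (fun j => sq_nonneg _) hbound
  refine ⟨hsummable, ?_⟩
  calc ∑' j, α j ^ 2 ≤ r := (hsummable.tsum_le_tsum hbound hsum.summable).trans_eq hsum.tsum_eq
    _ ≤ (r : ℝ) ^ 2 := by exact_mod_cast Nat.le_self_pow two_ne_zero r

/-- if `V ⊆ H` is a subspace of finite dimension `r ≥ 1` and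
`α` is the local coherence of `V` with respect to the unitary operator `F`
(i.e. `α j` is the supremum of `|(Fx)_j|` over unit vectors `x ∈ V`), then
`α` is square-summable and `∑ j, α j ^ 2 ≤ r ^ 2`. -/
theorem local_coherence_sq_summable
    (F : Hspace ≃ₗᵢ[ℂ] Hspace) (V : Submodule ℂ Hspace)
    (r : ℕ) (hr : 1 ≤ r) (hdim : Module.finrank ℂ V = r) [FiniteDimensional ℂ V]
    (α : ℕ → ℝ)
    (hα : ∀ j : ℕ, IsLUB {t : ℝ | ∃ x ∈ V, ‖x‖ = 1 ∧ t = ‖F x j‖} (α j)) :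
    Summable (fun j => α j ^ 2) ∧ ∑' j : ℕ, α j ^ 2 ≤ (r : ℝ) ^ 2 :=
  local_coherence_sq_summable_general F V r hdim α hα
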